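/- Let φ be an MTL formula in negation normal form over a finite alphabet Σ, and let A'_φ be the 1-ATA with deactivation constructed from φ. Then L(φ) = L(A'_φ), i.e., a finite timed word satisfies φ if and only if it is accepted by A'_φ. -/

import Mathlib

open scoped Classical NNReal

namespace ATAPaper

/-! ## Intervals with natural endpoints (possibly unbounded) -/

inductive NInterval where
  | cc (a b : ℕ)
  | co (a b : ℕ)
  | oc (a b : ℕ)
  | oo (a b : ℕ)
  | ci (a : ℕ)
  | oi (a : ℕ)
deriving DecidableEq

/-- Membership of a nonnegative real in an interval. -/
def NInterval.mem (v : ℝ≥0) : NInterval → Prop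
  | .cc a b => (a : ℝ≥0) ≤ v ∧ v ≤ (b : ℝ≥0)
  | .co a b => (a : ℝ≥0) ≤ v ∧ v < (b : ℝ≥0)
  | .oc a b => (a : ℝ≥0) < v ∧ v ≤ (b : ℝ≥0)
  | .oo a b => (a : ℝ≥0) < v ∧ v < (b : ℝ≥0)
  | .ci a => (a : ℝ≥0) ≤ v
  | .oi a => (a : ℝ≥0) < v

/-- The largest constant appearing in an interval. -/
def NInterval.bound : NInterval → ℕ
  | .cc a b | .co a b | .oc a b | .oo a b => max a b
  | .ci a | .oi a => a

/-! ## Transition formulas `Φ(Q)` with reset `x.φ` and deactivation `x̄.φ` -/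

inductive TF (Q : Type*) where
  | tt
  | ff
  | loc (q : Q)
  | guard (I : NInterval)
  | and (φ ψ : TF Q)
  | or (φ ψ : TF Q)
  | reset (φ : TF Q)
  | deact (φ : TF Q)

/-- A state of a 1-ATA is a location together with a clock value which is
either inactive (`none` = ⊥) or a nonnegative real.  A configuration is a
finite set of states. -/
abbrev Config (Q : Type*) := Finset (Q × Option ℝ≥0)

section BasicDefs

variable {Q A : Type*}

/-- `M ⊨_v φ`. -/
def TF.sat (M : Config Q) : TF Q → Option ℝ≥0 → Prop
  | .tt, _ => True
  | .ff, _ => False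
  | .loc q, v => (q, v) ∈ M
  | .guard I, v => v = none ∨ ∃ r, v = some r ∧ I.mem r
  | .and φ ψ, v => φ.sat M v ∧ ψ.sat M v
  | .or φ ψ, v => φ.sat M v ∨ ψ.sat M v
  | .reset φ, _ => φ.sat M (some 0)
  | .deact φ, _ => φ.sat M none

/-- `M` is a minimal model of `φ` on `v`. -/
def MinModel (M : Config Q) (v : Option ℝ≥0) (φ : TF Q) : Prop :=
  φ.sat M v ∧ ∀ M' ⊂ M, ¬ φ.sat M' v

/-- The disjuncts of a formula (assumed to be in disjunctive normal form). -/
def TF.disjuncts : TF Q → List (TF Q)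
  | .or φ ψ => φ.disjuncts ++ ψ.disjuncts
  | φ => [φ]

/-- The intervals occurring (anywhere) in a transition formula. -/
def TF.guards : TF Q → List NInterval
  | .guard I => [I]
  | .and φ ψ | .or φ ψ => φ.guards ++ ψ.guards
  | .reset φ | .deact φ => φ.guards
  | _ => []

/-! ## One-clock alternating timed automata with deactivation -/

structure OneATA (Q A : Type*) where
  init : Q
  final : Set Q
  delta : Q → A → Option (TF Q)

/-- `C` is one of the disjuncts of `δ(q,a)`. -/
def OneATA.isTarget (𝒜 : OneATA Q A) (q : Q) (a : A) (C : TF Q) : Prop :=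
  ∃ φ, 𝒜.delta q a = some φ ∧ C ∈ φ.disjuncts

/-- Time elapse on a configuration: add `d` to every active value, keep `⊥`. -/
noncomputable def Config.delay (γ : Config Q) (d : ℝ≥0) : Config Q :=
  γ.image (fun s => (s.1, s.2.map (· + d)))

/-- Discrete transition `γ →^{a,C} γ'` where the target `χ` assigns to each
state of `γ` a disjunct of the corresponding transition formula. -/
def OneATA.DStep (𝒜 : OneATA Q A) (γ : Config Q) (a : A)
    (χ : Q × Option ℝ≥0 → TF Q) (γ' : Config Q) : Prop :=
  (∀ s ∈ γ, 𝒜.isTarget s.1 a (χ s)) ∧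
  ∃ Mo : Q × Option ℝ≥0 → Config Q,
    (∀ s ∈ γ, MinModel (Mo s) s.2 (χ s)) ∧ γ' = γ.biUnion Mo

/-- Combined transition `γ →^{d,a,C} γ'`. -/
def OneATA.Step (𝒜 : OneATA Q A) (γ : Config Q) (d : ℝ≥0) (a : A)
    (χ : Q × Option ℝ≥0 → TF Q) (γ' : Config Q) : Prop :=
  𝒜.DStep (γ.delay d) a χ γ'

/-- A configuration is accepting if all its locations are accepting. -/
def OneATA.AcceptingCfg (𝒜 : OneATA Q A) (γ : Config Q) : Prop :=
  ∀ s ∈ γ, s.1 ∈ 𝒜.final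

/-- Accepting runs on (finite) timed words. -/
inductive OneATA.AccRun (𝒜 : OneATA Q A) : Config Q → List (ℝ≥0 × A) → Prop
  | nil {γ} : 𝒜.AcceptingCfg γ → 𝒜.AccRun γ []
  | cons {γ γ' : Config Q} {d : ℝ≥0} {a : A} {w : List (ℝ≥0 × A)}
      (χ : Q × Option ℝ≥0 → TF Q) :
      𝒜.Step γ d a χ γ' → 𝒜.AccRun γ' w → 𝒜.AccRun γ ((d, a) :: w)

/-- The language of a 1-ATA. -/
def OneATA.Lang (𝒜 : OneATA Q A) : Set (List (ℝ≥0 × A)) :=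
  {w | 𝒜.AccRun {(𝒜.init, some 0)} w}

/-- Reachability between configurations by timed and discrete transitions. -/
inductive OneATA.Reach (𝒜 : OneATA Q A) : Config Q → Config Q → Prop
  | refl (γ) : 𝒜.Reach γ γ
  | delay {γ γ'} (d : ℝ≥0) : 𝒜.Reach γ γ' → 𝒜.Reach γ (γ'.delay d)
  | step {γ γ' γ''} (a : A) (χ) : 𝒜.Reach γ γ' → 𝒜.DStep γ' a χ γ'' → 𝒜.Reach γ γ''

/-- The width of a configuration: the number of active states. -/
noncomputable def Config.width (γ : Config Q) : ℕ :=
  (γ.filter (fun s => s.2 ≠ none)).card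

/-- The 1-ATA has width at most `k`. -/
def OneATA.WidthBounded (𝒜 : OneATA Q A) (k : ℕ) : Prop :=
  ∀ γ, 𝒜.Reach {(𝒜.init, some 0)} γ → γ.width ≤ k

/-- All constants appearing in the automaton are at most `M`. -/
def OneATA.BoundedBy (𝒜 : OneATA Q A) (M : ℕ) : Prop :=
  ∀ q a φ, 𝒜.delta q a = some φ → ∀ I ∈ φ.guards, I.bound ≤ M

/-! ## Region equivalence and entailment on configurations -/

/-- `γ ≃_M γ'` via the bijection `h`. -/
def RegionEquivWith (M : ℕ) (γ γ' : Config Q)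
    (h : Q × Option ℝ≥0 → Q × Option ℝ≥0) : Prop :=
  Set.BijOn h ↑γ ↑γ' ∧
  (∀ s ∈ γ, (h s).1 = s.1) ∧
  (∀ s ∈ γ, ((h s).2 = none ↔ s.2 = none)) ∧
  (∀ s ∈ γ, ∀ r r', s.2 = some r → (h s).2 = some r' →
    ((r ≤ (M : ℝ≥0)) ↔ (r' ≤ (M : ℝ≥0))) ∧
    (r ≤ (M : ℝ≥0) →
      (⌊(r : ℝ)⌋ = ⌊(r' : ℝ)⌋ ∧ (Int.fract (r : ℝ) = 0 ↔ Int.fract (r' : ℝ) = 0)))) ∧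
  (∀ s₁ ∈ γ, ∀ s₂ ∈ γ, ∀ r₁ r₂ r₁' r₂',
    s₁.2 = some r₁ → s₂.2 = some r₂ → (h s₁).2 = some r₁' → (h s₂).2 = some r₂' →
    r₁ ≤ (M : ℝ≥0) → r₂ ≤ (M : ℝ≥0) →
    (Int.fract (r₁ : ℝ) ≤ Int.fract (r₂ : ℝ) ↔ Int.fract (r₁' : ℝ) ≤ Int.fract (r₂' : ℝ)))

/-- Region equivalence `γ ≃_M γ'`. -/
def RegionEquiv (M : ℕ) (γ γ' : Config Q) : Prop := ∃ h, RegionEquivWith M γ γ' h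

/-- Configuration entailment `γ ⊨_M γ'` : some subset of `γ'` is region equivalent
to `γ`. -/
def CfgEntails (M : ℕ) (γ γ' : Config Q) : Prop :=
  ∃ γ'' ⊆ γ', RegionEquiv M γ γ''

end BasicDefs


/-! ## MTL (negation normal form) -/

inductive MTL (A : Type*) where
  | atom (a : A)
  | natom (a : A)
  | conj (φ ψ : MTL A)
  | disj (φ ψ : MTL A)
  | next (I : NInterval) (φ : MTL A)
  | untl (I : NInterval) (φ ψ : MTL A)

section MTLDefs

variable {A : Type*}

/-- Accumulated time `Σ_{c=1}^{p} d_c` of the first `p` letters of a timed word. -/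
def twtime (w : List (ℝ≥0 × A)) (p : ℕ) : ℝ≥0 := ((w.take p).map Prod.fst).sum

/-- `(w, i) ⊨ φ` (positions are 0-based). -/
def MTL.holdsAt (w : List (ℝ≥0 × A)) : MTL A → ℕ → Prop
  | .atom a, i => ∃ h : i < w.length, (w.get ⟨i, h⟩).2 = a
  | .natom a, i => ∃ h : i < w.length, (w.get ⟨i, h⟩).2 ≠ a
  | .conj φ ψ, i => φ.holdsAt w i ∧ ψ.holdsAt w i
  | .disj φ ψ, i => φ.holdsAt w i ∨ ψ.holdsAt w i
  | .next I φ, i => ∃ h : i + 1 < w.length, φ.holdsAt w (i + 1) ∧ I.mem (w.get ⟨i + 1, h⟩).1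
  | .untl I φ ψ, i => ∃ k, i ≤ k ∧ k < w.length ∧ ψ.holdsAt w k ∧
      I.mem (twtime w (k + 1) - twtime w (i + 1)) ∧
      ∀ j, i ≤ j → j < k → φ.holdsAt w j

/-- The language of an MTL formula (`w ⊨ φ` iff `φ` holds at the first position). -/
def MTL.Lang (φ : MTL A) : Set (List (ℝ≥0 × A)) := {w | φ.holdsAt w 0}

/-- Pure LTL formulas: every interval is `[0, ∞)`. -/
def MTL.isPure : MTL A → Bool
  | .atom _ | .natom _ => true
  | .conj φ ψ | .disj φ ψ => φ.isPure && ψ.isPure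
  | .next I φ => decide (I = NInterval.ci 0) && φ.isPure
  | .untl I φ ψ => decide (I = NInterval.ci 0) && φ.isPure && ψ.isPure

/-- The subformulas of an MTL formula. -/
def MTL.subfs : MTL A → List (MTL A)
  | .atom a => [.atom a]
  | .natom a => [.natom a]
  | .conj φ ψ => .conj φ ψ :: (φ.subfs ++ ψ.subfs)
  | .disj φ ψ => .disj φ ψ :: (φ.subfs ++ ψ.subfs)
  | .next I φ => .next I φ :: φ.subfs
  | .untl I φ ψ => .untl I φ ψ :: (φ.subfs ++ ψ.subfs)

/-- One-sided MTL: in every Until, the left argument is a pure LTL formula. -/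
def MTL.oneSided : MTL A → Prop
  | .atom _ | .natom _ => True
  | .conj φ ψ | .disj φ ψ => φ.oneSided ∧ ψ.oneSided
  | .next _ φ => φ.oneSided
  | .untl _ φ ψ => φ.isPure = true ∧ ψ.oneSided

/-! ## The MTL-to-1-ATA construction with deactivation -/

/-- Locations of the constructed automaton: the initial location `φ_init`,
locations for formulas (in particular Until subformulas and `φ` itself), and
locations `(X_I ψ)ʳ`. -/
inductive MLoc (A : Type*) where
  | start
  | form (ψ : MTL A)
  | nextr (I : NInterval) (ψ : MTL A)

/-- Prefix `x̄.` if `ψ` is pure LTL, and nothing otherwise. -/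
def barP (ψ : MTL A) (φ : TF (MLoc A)) : TF (MLoc A) :=
  if ψ.isPure then .deact φ else φ

/-- Prefix `x̄.` if `ψ` is pure LTL, and `x.` otherwise. -/
def rhoP (ψ : MTL A) (φ : TF (MLoc A)) : TF (MLoc A) :=
  if ψ.isPure then .deact φ else .reset φ

variable [DecidableEq A]

/-- The transition formula `δ(ψ, a)` for subformulas `ψ`. -/
def dform : MTL A → A → TF (MLoc A)
  | .atom b, a => if b = a then .tt else .ff
  | .natom b, a => if b = a then .ff else .tt
  | .conj φ ψ, a => .and (barP φ (dform φ a)) (barP ψ (dform ψ a))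
  | .disj φ ψ, a => .or (barP φ (dform φ a)) (barP ψ (dform ψ a))
  | .next I ψ, _ => .reset (.loc (.nextr I ψ))
  | .untl I φ ψ, a =>
      .or (.and (rhoP ψ (dform ψ a)) (.guard I))
          (.and (rhoP φ (dform φ a)) (.loc (.form (.untl I φ ψ))))

/-- The transition function of the constructed automaton `A'_φ`. -/
def mlocDelta (φ₀ : MTL A) : MLoc A → A → Option (TF (MLoc A))
  | .start, a => some (rhoP φ₀ (dform φ₀ a))
  | .form ψ, a => some (dform ψ a)
  | .nextr I ψ, a => some (.and (.guard I) (rhoP ψ (dform ψ a)))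

/-- The 1-ATA `A'_φ` constructed from an MTL formula `φ`:
initial location `φ_init`, no accepting locations. -/
def ataOf (φ : MTL A) : OneATA (MLoc A) A :=
  { init := .start, final := ∅, delta := mlocDelta φ }

end MTLDefs

section KB
variable {A : Type*}
/-- The recursive width bound `k_ψ`. -/
def kBound : MTL A → ℕ
  | .atom _ | .natom _ => 1
  | .conj φ ψ => if (MTL.conj φ ψ).isPure then 1 else kBound φ + kBound ψ
  | .disj φ ψ => if (MTL.disj φ ψ).isPure then 1 else max (kBound φ) (kBound ψ)
  | .next I φ => if (MTL.next I φ).isPure then 1 else kBound φ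
  | .untl I φ ψ => if (MTL.untl I φ ψ).isPure then 1 else kBound ψ
end KB


/-! ## Zones (variables `x_{q,i}`), nodes and their configuration semantics -/

section ZoneDefs

variable {Q A : Type*}

/-- A (semantic) zone: a finite set of variables `x_{q,i}` together with the
set of valuations satisfying its constraints. -/
structure SemZone (Q : Type*) where
  vars : Finset (Q × ℕ)
  val : ((Q × ℕ) → ℝ≥0) → Prop

/-- `γ` satisfies the node `(Z, IA)` via the surjection `h`. -/
def NodeSatVia (Z : SemZone Q) (IA : Finset (Q × ℕ)) (γ : Config Q)
    (h : Q × ℕ → Q × Option ℝ≥0) : Prop :=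
  (∀ y ∈ Z.vars ∪ IA, (h y).1 = y.1) ∧
  (∀ y ∈ Z.vars ∪ IA, h y ∈ γ) ∧
  (∀ s ∈ γ, ∃ y ∈ Z.vars ∪ IA, h y = s) ∧
  (∀ y ∈ IA, (h y).2 = none) ∧
  ∃ ν : (Q × ℕ) → ℝ≥0, (∀ y ∈ Z.vars, (h y).2 = some (ν y)) ∧ Z.val ν

/-- `γ ∈ ⟦(Z, IA)⟧`. -/
def NodeSat (Z : SemZone Q) (IA : Finset (Q × ℕ)) (γ : Config Q) : Prop :=
  ∃ h, NodeSatVia Z IA γ h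

/-- The special empty node `(Z_∅, {})`, satisfied exactly by the empty
configuration. -/
def emptySemZone {Q : Type*} : SemZone Q := ⟨∅, fun _ => True⟩

/-- The initial node `((x_{q₀,1} = 0), ∅)`. -/
def initSemZone (𝒜 : OneATA Q A) : SemZone Q :=
  ⟨{(𝒜.init, 1)}, fun ν => ν (𝒜.init, 1) = 0⟩

/-! ### Simple clauses and the successor computation -/

/-- A clause is a conjunction of atoms of the form `true`, `false`, `q`, `I`,
`x.q`, `x̄.q`. -/
def TF.isSimpleConj : TF Q → Bool
  | .tt => true
  | .ff => true
  | .loc _ => true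
  | .guard _ => true
  | .reset (.loc _) => true
  | .deact (.loc _) => true
  | .and φ ψ => φ.isSimpleConj && ψ.isSimpleConj
  | _ => false

/-- Every transition formula of the automaton is in disjunctive normal form. -/
def OneATA.normalized (𝒜 : OneATA Q A) : Prop :=
  ∀ q a φ, 𝒜.delta q a = some φ → ∀ C ∈ φ.disjuncts, C.isSimpleConj = true

/-- The interval atoms of a clause. -/
def TF.topGuards : TF Q → List NInterval
  | .guard I => [I]
  | .and φ ψ => φ.topGuards ++ ψ.topGuards
  | _ => []

/-- The location atoms `q` of a clause. -/
def TF.atomLocs : TF Q → List Q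
  | .loc q => [q]
  | .and φ ψ => φ.atomLocs ++ ψ.atomLocs
  | _ => []

/-- The reset atoms `x.q` of a clause. -/
def TF.resetLocs : TF Q → List Q
  | .reset (.loc q) => [q]
  | .and φ ψ => φ.resetLocs ++ ψ.resetLocs
  | _ => []

/-- The deactivation atoms `x̄.q` of a clause. -/
def TF.deactLocs : TF Q → List Q
  | .deact (.loc q) => [q]
  | .and φ ψ => φ.deactLocs ++ ψ.deactLocs
  | _ => []

/-- The inactive variable set of the successor node: `x'_{q,0}` for every atom
`x̄.q`, and for every atom `q` of a clause of an inactive variable. -/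
noncomputable def succIA (Z : SemZone Q) (IA : Finset (Q × ℕ))
    (T : Q × ℕ → TF Q) : Finset (Q × ℕ) :=
  ((Z.vars ∪ IA).biUnion fun y => ((T y).deactLocs.toFinset).image fun q => (q, 0)) ∪
  (IA.biUnion fun y => ((T y).atomLocs.toFinset).image fun q => (q, 0))

/-- Number of active variables whose clause contains the atom `q`. -/
noncomputable def copyCount (Z : SemZone Q) (T : Q × ℕ → TF Q) (q : Q) : ℕ :=
  (Z.vars.filter fun y => q ∈ (T y).atomLocs).card

/-- The active variable set of the successor node: `x'_{q,1}` for resets, and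
fresh variables `x'_{q,ℓ}` with `2 ≤ ℓ` (smallest free indices) for atoms `q`
of clauses of active variables. -/
noncomputable def succVars (Z : SemZone Q) (IA : Finset (Q × ℕ))
    (T : Q × ℕ → TF Q) : Finset (Q × ℕ) :=
  (((Z.vars ∪ IA).biUnion fun y => (T y).resetLocs.toFinset).image fun q => (q, 1)) ∪
  ((Z.vars.biUnion fun y => (T y).atomLocs.toFinset).biUnion fun q =>
    (Finset.Icc 2 (copyCount Z T q + 1)).image fun i => (q, i))

/-- The successor computation on nodes:  time elapse, guard intersection,
reset/deactivation with fresh variables, and renaming (canonicalization is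
semantically transparent).  `T` assigns to every variable of the node a
disjunct of the transition formula of its location on the letter `a`.  If a
chosen disjunct is `false`, the target is discarded; if all chosen disjuncts
are `true`, the successor is the special empty node. -/
def Succ (𝒜 : OneATA Q A) (Z : SemZone Q) (IA : Finset (Q × ℕ)) (a : A)
    (T : Q × ℕ → TF Q) (Z' : SemZone Q) (IA' : Finset (Q × ℕ)) : Prop :=
  (∀ y ∈ Z.vars ∪ IA, 𝒜.isTarget y.1 a (T y)) ∧
  (∀ y ∈ Z.vars ∪ IA, T y ≠ TF.ff) ∧
  ((∀ y ∈ Z.vars ∪ IA, T y = TF.tt) → (Z' = emptySemZone ∧ IA' = ∅)) ∧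
  ((¬ ∀ y ∈ Z.vars ∪ IA, T y = TF.tt) →
    IA' = succIA Z IA T ∧
    Z'.vars = succVars Z IA T ∧
    ∃ g : (Q × ℕ) → Q → ℕ,
      (∀ y ∈ Z.vars, ∀ q ∈ (T y).atomLocs, 2 ≤ g y q ∧ g y q ≤ copyCount Z T q + 1) ∧
      (∀ y₁ ∈ Z.vars, ∀ y₂ ∈ Z.vars, ∀ q, q ∈ (T y₁).atomLocs → q ∈ (T y₂).atomLocs →
        g y₁ q = g y₂ q → y₁ = y₂) ∧
      Z'.val = fun ν' => ∃ (ν : (Q × ℕ) → ℝ≥0) (d : ℝ≥0), Z.val ν ∧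
        (∀ y ∈ Z.vars, ∀ I ∈ (T y).topGuards, I.mem (ν y + d)) ∧
        (∀ y ∈ Z.vars ∪ IA, ∀ q ∈ (T y).resetLocs, ν' (q, 1) = 0) ∧
        (∀ y ∈ Z.vars, ∀ q ∈ (T y).atomLocs, ν' (q, g y q) = ν y + d))

/-- Time elapse on a single state. -/
noncomputable def stDelay (s : Q × Option ℝ≥0) (d : ℝ≥0) : Q × Option ℝ≥0 :=
  (s.1, s.2.map (· + d))

/-- `γ →^{d,a,(C₁,…,C_m)} γ'` where the disjuncts chosen in the step correspond,
via a surjection witnessing `γ ∈ ⟦(Z,IA)⟧`, to the target tuple `T` of the node. -/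
def StepMatching (𝒜 : OneATA Q A) (Z : SemZone Q) (IA : Finset (Q × ℕ))
    (γ : Config Q) (d : ℝ≥0) (a : A) (T : Q × ℕ → TF Q) (γ' : Config Q) : Prop :=
  ∃ h χ, NodeSatVia Z IA γ h ∧
    (∀ y ∈ Z.vars ∪ IA, χ (stDelay (h y) d) = T y) ∧
    𝒜.Step γ d a χ γ'

/-- Reachability in the zone graph. -/
inductive ZReach (𝒜 : OneATA Q A) :
    SemZone Q × Finset (Q × ℕ) → SemZone Q × Finset (Q × ℕ) → Prop
  | refl (n) : ZReach 𝒜 n n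
  | step {n₁ n₂ n₃} (a : A) (T) :
      ZReach 𝒜 n₁ n₂ → Succ 𝒜 n₂.1 n₂.2 a T n₃.1 n₃.2 → ZReach 𝒜 n₁ n₃

/-- A node is accepting if the locations of all its variables are accepting. -/
def AccNode (𝒜 : OneATA Q A) (Z : SemZone Q) (IA : Finset (Q × ℕ)) : Prop :=
  ∀ y ∈ Z.vars ∪ IA, y.1 ∈ 𝒜.final

/-! ### Entailment between nodes -/

/-- Node entailment `(Z,IA) ⊨_M (Z',IA')`. -/
def NodeEntails (M : ℕ) (Z : SemZone Q) (IA : Finset (Q × ℕ))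
    (Z' : SemZone Q) (IA' : Finset (Q × ℕ)) : Prop :=
  ∀ γ', NodeSat Z' IA' γ' → ∃ γ, NodeSat Z IA γ ∧ CfgEntails M γ γ'

/-- Classical region equivalence between valuations over the variable set `V`. -/
def ValRegEquiv (M : ℕ) (V : Finset (Q × ℕ)) (u u' : (Q × ℕ) → ℝ≥0) : Prop :=
  (∀ y ∈ V, ((u y ≤ (M : ℝ≥0)) ↔ (u' y ≤ (M : ℝ≥0))) ∧
    (u y ≤ (M : ℝ≥0) →
      (⌊(u y : ℝ)⌋ = ⌊(u' y : ℝ)⌋ ∧ (Int.fract (u y : ℝ) = 0 ↔ Int.fract (u' y : ℝ) = 0)))) ∧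
  (∀ y ∈ V, ∀ z ∈ V, u y ≤ (M : ℝ≥0) → u z ≤ (M : ℝ≥0) →
    (Int.fract (u y : ℝ) ≤ Int.fract (u z : ℝ) ↔
      Int.fract (u' y : ℝ) ≤ Int.fract (u' z : ℝ)))

/-- The bounded entailment check `(Z,IA) ⊨ᵇ_M (Z',IA')`, for zones over the same
variables, using the identity correspondence of variables. -/
def BoundedEntails (M : ℕ) (Z : SemZone Q) (IA : Finset (Q × ℕ))
    (Z' : SemZone Q) (IA' : Finset (Q × ℕ)) : Prop :=
  IA ⊆ IA' ∧ ∀ u', Z'.val u' → ∃ u, Z.val u ∧ ValRegEquiv M Z.vars u u'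

/-! ### Syntactic zones -/

/-- Comparison relations in zone constraints. -/
inductive ZRel | lt | le | gt | ge

def ZRel.holds : ZRel → ℝ → ℝ → Prop
  | .lt, x, y => x < y
  | .le, x, y => x ≤ y
  | .gt, x, y => x > y
  | .ge, x, y => x ≥ y

/-- A zone constraint: `y ∼ k` or `y − x ∼ k` with `k ∈ ℤ`. -/
inductive ZConstr (Q : Type*) where
  | single (y : Q × ℕ) (r : ZRel) (k : ℤ)
  | diff (y x : Q × ℕ) (r : ZRel) (k : ℤ)

def ZConstr.holds (ν : (Q × ℕ) → ℝ≥0) : ZConstr Q → Prop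
  | .single y r k => r.holds (ν y : ℝ) (k : ℝ)
  | .diff y x r k => r.holds ((ν y : ℝ) - (ν x : ℝ)) (k : ℝ)

/-- The variables occurring in a constraint. -/
def ZConstr.varsIn : ZConstr Q → List (Q × ℕ)
  | .single y _ _ => [y]
  | .diff y x _ _ => [y, x]

/-- A (syntactic) zone: a finite set of variables and a finite conjunction of
constraints. -/
structure Zone (Q : Type*) where
  vars : Finset (Q × ℕ)
  constrs : List (ZConstr Q)

def Zone.satBy (Z : Zone Q) (ν : (Q × ℕ) → ℝ≥0) : Prop :=
  ∀ c ∈ Z.constrs, c.holds ν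

/-- Constraints only mention variables of the zone. -/
def Zone.wf (Z : Zone Q) : Prop :=
  ∀ c ∈ Z.constrs, ∀ v ∈ c.varsIn, v ∈ Z.vars

/-- The semantic zone of a syntactic zone. -/
def Zone.toSem (Z : Zone Q) : SemZone Q := ⟨Z.vars, Z.satBy⟩

/-! ### The `N'_r` sets for the entailment check -/

/-- Location preserving one-to-one mapping from `Var(Z)` to `Var(Z')`. -/
def LocPresInj (Z Z' : Zone Q) (r : Q × ℕ → Q × ℕ) : Prop :=
  Set.InjOn r ↑Z.vars ∧ (∀ y ∈ Z.vars, r y ∈ Z'.vars) ∧ ∀ y ∈ Z.vars, (r y).1 = y.1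

/-- `γ' ∈ N'_r` : `γ'` satisfies `(Z', IA')` via a surjection whose induced
valuation, transported back along `r`, is region equivalent to no valuation
satisfying `Z`. -/
def InNr (M : ℕ) (Z Z' : Zone Q) (IA' : Finset (Q × ℕ))
    (r : Q × ℕ → Q × ℕ) (γ' : Config Q) : Prop :=
  ∃ (h' : Q × ℕ → Q × Option ℝ≥0) (ν' : (Q × ℕ) → ℝ≥0),
    (∀ y ∈ Z'.vars ∪ IA', (h' y).1 = y.1) ∧
    (∀ y ∈ Z'.vars ∪ IA', h' y ∈ γ') ∧
    (∀ s ∈ γ', ∃ y ∈ Z'.vars ∪ IA', h' y = s) ∧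
    (∀ y ∈ IA', (h' y).2 = none) ∧
    (∀ y ∈ Z'.vars, (h' y).2 = some (ν' y)) ∧
    Z'.satBy ν' ∧
    ∀ ν, Z.satBy ν → ¬ ValRegEquiv M Z.vars ν (fun y => ν' (r y))

end ZoneDefs


/-! ## The zones `Z_φ` and `Z'_φ` constructed from a monotone 3-CNF formula -/

/-- The two locations `q_x` and `q_y`. -/
inductive XY | qx | qy
deriving DecidableEq

/-- The zone variables used in the reduction, for a formula with `m` clauses:
`px_j, py_j, nx_j, ny_j` (dummy clauses), `x^i_j, y^i_j` (clause literals) for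
`Z'_φ`, and `x⁺_j, y⁺_j, x⁻_j, y⁻_j` for `Z_φ`. -/
inductive MVar (m : ℕ) where
  | px (j : Fin 3)
  | py (j : Fin 3)
  | nx (j : Fin 3)
  | ny (j : Fin 3)
  | xc (i : Fin m) (j : Fin 3)
  | yc (i : Fin m) (j : Fin 3)
  | xp (j : Fin 3)
  | yp (j : Fin 3)
  | xm (j : Fin 3)
  | ym (j : Fin 3)
deriving DecidableEq

section Mono

variable {m : ℕ}

/-- The location of each variable. -/
def MVar.loc : MVar m → XY
  | .px _ | .nx _ | .xc _ _ | .xp _ | .xm _ => .qx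
  | .py _ | .ny _ | .yc _ _ | .yp _ | .ym _ => .qy

def MVar.inZ : MVar m → Prop
  | .xp _ | .yp _ | .xm _ | .ym _ => True
  | _ => False

/-- The variables of `Z_φ`. -/
def ZVars (m : ℕ) : Set (MVar m) := {y | y.inZ}

/-- The variables of `Z'_φ`. -/
def Z'Vars (m : ℕ) : Set (MVar m) := {y | ¬ y.inZ}

/-- `γ` satisfies the node `(Z, ∅)` (zone given semantically by the predicate
`P` on valuations, over the variable set `V`) via the surjection `h`. -/
def MSat (V : Set (MVar m)) (P : (MVar m → ℝ≥0) → Prop) (γ : Config XY)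
    (h : MVar m → XY × Option ℝ≥0) : Prop :=
  (∀ y ∈ V, (h y).1 = y.loc) ∧
  (∀ y ∈ V, h y ∈ γ) ∧
  (∀ s ∈ γ, ∃ y ∈ V, h y = s) ∧
  ∃ ν : MVar m → ℝ≥0, (∀ y ∈ V, (h y).2 = some (ν y)) ∧ P ν

/-- The constraints of the zone `Z_φ` (with `k` positive clauses and `m`
clauses in total). -/
def ZphiSat (m k : ℕ) (ν : MVar m → ℝ≥0) : Prop :=
  (∀ j : Fin 3, 0 ≤ (ν (.yp j) : ℝ) - ν (.xp j) ∧ (ν (.yp j) : ℝ) - ν (.xp j) ≤ 1) ∧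
  (∀ j : Fin 3, 1 < (ν (.ym j) : ℝ) - ν (.xm j) ∧ (ν (.ym j) : ℝ) - ν (.xm j) ≤ 2) ∧
  (∀ j : Fin 2, 1 ≤ (ν (.xp j.succ) : ℝ) - ν (.yp j.castSucc) ∧
      (ν (.xp j.succ) : ℝ) - ν (.yp j.castSucc) ≤ 5) ∧
  (∀ j : Fin 2, 1 ≤ (ν (.xm j.succ) : ℝ) - ν (.ym j.castSucc) ∧
      (ν (.xm j.succ) : ℝ) - ν (.ym j.castSucc) ≤ 5) ∧
  ((ν (.yp 2) : ℝ) < 14 * ((k : ℝ) + 1) - 2) ∧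
  ((ν (.xm 0) : ℝ) > 14 * ((k : ℝ) + 1) - 2) ∧
  ((ν (.ym 2) : ℝ) - ν (.xp 0) < 14 * ((m : ℝ) + 2) - 6)

/-- The constraints of the zone `Z'_φ`, for a monotone 3-CNF formula whose
`i`-th clause has literals on the propositional variables `lits i 0`,
`lits i 1`, `lits i 2`. -/
def Z'phiSat (m : ℕ) {PV : Type*} (lits : Fin m → Fin 3 → PV)
    (ν : MVar m → ℝ≥0) : Prop :=
  (∀ j : Fin 3, (ν (.px j) : ℝ) = 3 * (j : ℕ) ∧ (ν (.py j) : ℝ) = 3 * (j : ℕ)) ∧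
  (∀ j : Fin 3, (ν (.nx j) : ℝ) = 14 * ((m : ℝ) + 1) + 3 * (j : ℕ) ∧
      (ν (.ny j) : ℝ) = 14 * ((m : ℝ) + 1) + 3 * (j : ℕ) + 2) ∧
  (∀ (i : Fin m) (j : Fin 3),
      14 * ((i : ℕ) + 1 : ℝ) + 3 * (j : ℕ) ≤ (ν (.xc i j) : ℝ) ∧
      (ν (.xc i j) : ℝ) ≤ 14 * ((i : ℕ) + 1 : ℝ) + 3 * (j : ℕ) + 2 ∧
      14 * ((i : ℕ) + 1 : ℝ) + 3 * (j : ℕ) ≤ (ν (.yc i j) : ℝ) ∧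
      (ν (.yc i j) : ℝ) ≤ 14 * ((i : ℕ) + 1 : ℝ) + 3 * (j : ℕ) + 2 ∧
      (ν (.xc i j) : ℝ) ≤ (ν (.yc i j) : ℝ)) ∧
  (∀ (i i' : Fin m) (j j' : Fin 3), lits i j = lits i' j' →
      (ν (.xc i' j') : ℝ) - ν (.xc i j) = 14 * (((i' : ℕ) : ℝ) - ((i : ℕ) : ℝ)) +
        3 * (((j' : ℕ) : ℝ) - ((j : ℕ) : ℝ)) ∧
      (ν (.yc i' j') : ℝ) - ν (.yc i j) = 14 * (((i' : ℕ) : ℝ) - ((i : ℕ) : ℝ)) +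
        3 * (((j' : ℕ) : ℝ) - ((j : ℕ) : ℝ)))

/-- The (real) value of a state of a configuration. -/
noncomputable def sval (s : XY × Option ℝ≥0) : ℝ := ((s.2.getD 0 : ℝ≥0) : ℝ)

/-- The assignment `α_{γ'}` extracted from a surjection `h'` witnessing that a
configuration satisfies `(Z'_φ, ∅)`: a propositional variable is true iff the
difference `y − x` of (one of) its literal occurrences exceeds 1. -/
def alphaOf {PV : Type*} (lits : Fin m → Fin 3 → PV)
    (h' : MVar m → XY × Option ℝ≥0) (p : PV) : Prop :=
  ∃ (i : Fin m) (j : Fin 3), lits i j = p ∧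
    1 < sval (h' (.yc i j)) - sval (h' (.xc i j))

/-- The assignment `α` falsifies clause `C_i` (clauses `C_1, …, C_k` are
positive, the rest negative): all of its literals are false. -/
def Falsifies {PV : Type*} (k : ℕ) (lits : Fin m → Fin 3 → PV)
    (α : PV → Prop) (i : Fin m) : Prop :=
  if (i : ℕ) < k then ∀ j : Fin 3, ¬ α (lits i j) else ∀ j : Fin 3, α (lits i j)

/-- The monotone 3-CNF formula is satisfiable. -/
def MonoSatisfiable {PV : Type*} (k : ℕ) (lits : Fin m → Fin 3 → PV) : Prop :=
  ∃ α : PV → Prop, ∀ i : Fin m, ¬ Falsifies k lits α i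

end Mono

/-!
A single state accepts `(d, a) :: w` iff its transition formula, evaluated at the
delayed clock value, holds in the set of states accepting `w`, because the states of
an alternating automaton evolve independently. For `A'_φ` this turns acceptance into
a recursion along the formula: the state `(ψ₁ U_I ψ₂, v)` accepts `w` iff `ψ₂` holds
at some position `k` of `w` with `ψ₁` holding before it and `v` plus the time elapsed
up to `k` in `I`, and, by induction on `ψ`, evaluating `δ(ψ, a)` with a reset clock
(or a deactivated one when `ψ` is pure LTL) amounts to `ψ` holding at the current position.
-/

section Automata

variable {Q A : Type*}

def NInterval.admits (I : NInterval) (v : Option ℝ≥0) : Prop :=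
  v = none ∨ ∃ r, v = some r ∧ I.mem r

@[simp]
lemma NInterval.admits_none (I : NInterval) : I.admits none := Or.inl rfl

@[simp]
lemma NInterval.admits_some (I : NInterval) (r : ℝ≥0) : I.admits (some r) ↔ I.mem r :=
  ⟨fun h => h.elim (fun h => (Option.some_ne_none r h).elim)
    (fun ⟨_, h, hr⟩ => Option.some.inj h ▸ hr), fun h => Or.inr ⟨r, rfl, h⟩⟩

lemma NInterval.admits_ci_zero (v : Option ℝ≥0) : (NInterval.ci 0).admits v := by
  cases v with
  | none => exact NInterval.admits_none _
  | some r => exact (NInterval.admits_some _ r).2 (by simp [NInterval.mem])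

/-- `TF.sat` for a possibly infinite set of states, given as a predicate. -/
def TF.satPred (P : Q × Option ℝ≥0 → Prop) : TF Q → Option ℝ≥0 → Prop
  | .tt, _ => True
  | .ff, _ => False
  | .loc q, v => P (q, v)
  | .guard I, v => I.admits v
  | .and φ ψ, v => φ.satPred P v ∧ ψ.satPred P v
  | .or φ ψ, v => φ.satPred P v ∨ ψ.satPred P v
  | .reset φ, _ => φ.satPred P (some 0)
  | .deact φ, _ => φ.satPred P none

lemma TF.sat_mono {M M' : Config Q} (h : M ⊆ M') {φ : TF Q} {v : Option ℝ≥0}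
    (hφ : φ.sat M v) : φ.sat M' v := by
  induction φ generalizing v with
  | loc q => exact h hφ
  | and φ ψ ihφ ihψ => exact ⟨ihφ hφ.1, ihψ hφ.2⟩
  | or φ ψ ihφ ihψ => exact hφ.imp ihφ ihψ
  | reset φ ih => exact ih hφ
  | deact φ ih => exact ih hφ
  | tt | ff | guard I => exact hφ

lemma TF.exists_sat_iff_satPred (P : Q × Option ℝ≥0 → Prop) (φ : TF Q) (v : Option ℝ≥0) :
    (∃ M : Config Q, φ.sat M v ∧ ∀ s ∈ M, P s) ↔ φ.satPred P v := by
  induction φ generalizing v with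
  | tt => exact ⟨fun _ => trivial, fun _ => ⟨∅, trivial, by simp⟩⟩
  | ff => simp [TF.sat, TF.satPred]
  | loc q =>
    refine ⟨fun ⟨M, hM, hP⟩ => hP _ hM, fun h => ⟨{(q, v)}, Finset.mem_singleton_self _, ?_⟩⟩
    simpa [TF.satPred] using h
  | guard I => exact ⟨fun ⟨_, hM, _⟩ => hM, fun h => ⟨∅, h, by simp⟩⟩
  | and φ ψ ihφ ihψ =>
    rw [TF.satPred, ← ihφ, ← ihψ]
    constructor
    · rintro ⟨M, ⟨hφ, hψ⟩, hP⟩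
      exact ⟨⟨M, hφ, hP⟩, ⟨M, hψ, hP⟩⟩
    · rintro ⟨⟨M, hφ, hPφ⟩, ⟨N, hψ, hPψ⟩⟩
      refine ⟨M ∪ N, ⟨TF.sat_mono Finset.subset_union_left hφ,
        TF.sat_mono Finset.subset_union_right hψ⟩, fun s hs => ?_⟩
      rcases Finset.mem_union.1 hs with hs | hs
      exacts [hPφ s hs, hPψ s hs]
  | or φ ψ ihφ ihψ =>
    rw [TF.satPred, ← ihφ, ← ihψ, ← exists_or]
    simp only [TF.sat, or_and_right]
  | reset φ ih => exact ih (some 0)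
  | deact φ ih => exact ih none

lemma TF.sat_iff_exists_disjunct (φ : TF Q) (M : Config Q) (v : Option ℝ≥0) :
    φ.sat M v ↔ ∃ C ∈ φ.disjuncts, C.sat M v := by
  induction φ with
  | or φ ψ ihφ ihψ =>
    simp only [TF.sat, TF.disjuncts, List.mem_append, ihφ, ihψ, or_and_right, exists_or]
  | _ => simp [TF.disjuncts]

lemma TF.exists_minModel_subset {φ : TF Q} {v : Option ℝ≥0} {M : Config Q} (h : φ.sat M v) :
    ∃ M' ⊆ M, MinModel M' v φ := by
  induction M using Finset.strongInduction with
  | H M ih =>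
    by_cases hmin : ∃ M' ⊂ M, φ.sat M' v
    · obtain ⟨M', hM', hsat⟩ := hmin
      obtain ⟨M'', hM'', hmin'⟩ := ih M' hM' hsat
      exact ⟨M'', hM''.trans hM'.subset, hmin'⟩
    · exact ⟨M, subset_rfl, h, fun M' hM' hsat => hmin ⟨M', hM', hsat⟩⟩

lemma Config.delay_singleton (s : Q × Option ℝ≥0) (d : ℝ≥0) :
    ({s} : Config Q).delay d = {stDelay s d} := by
  simp [Config.delay, stDelay]

namespace OneATA

variable {𝒜 : OneATA Q A}

lemma AccRun.subset {γ : Config Q} {w : List (ℝ≥0 × A)} (h : 𝒜.AccRun γ w) {γ' : Config Q}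
    (hγ : γ' ⊆ γ) : 𝒜.AccRun γ' w := by
  induction h generalizing γ' with
  | nil hacc => exact .nil fun s hs => hacc s (hγ hs)
  | @cons γ _ d a w χ hstep _ ih =>
    obtain ⟨htgt, Mo, hMo, rfl⟩ := hstep
    have hdelay : γ'.delay d ⊆ γ.delay d := Finset.image_subset_image hγ
    exact .cons χ ⟨fun s hs => htgt s (hdelay hs), Mo, fun s hs => hMo s (hdelay hs), rfl⟩
      (ih (Finset.biUnion_subset_biUnion_of_subset_left Mo hdelay))

lemma accRun_singleton_cons_iff (s : Q × Option ℝ≥0) (d : ℝ≥0) (a : A)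
    (w : List (ℝ≥0 × A)) :
    𝒜.AccRun {s} ((d, a) :: w) ↔ ∃ C M, 𝒜.isTarget (stDelay s d).1 a C ∧
      MinModel M (stDelay s d).2 C ∧ 𝒜.AccRun M w := by
  constructor
  · rintro (_ | ⟨χ, ⟨htgt, Mo, hMo, rfl⟩, hrun⟩)
    simp only [Config.delay_singleton, Finset.mem_singleton, forall_eq,
      Finset.singleton_biUnion] at htgt hMo hrun
    exact ⟨_, _, htgt, hMo, hrun⟩
  · rintro ⟨C, M, htgt, hmin, hrun⟩
    refine .cons (fun _ => C) ⟨?_, fun _ => M, ?_, ?_⟩ hrun <;>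
      simp [Config.delay_singleton, htgt, hmin]

lemma accRun_of_forall_singleton {w : List (ℝ≥0 × A)} :
    ∀ {γ : Config Q}, (∀ s ∈ γ, 𝒜.AccRun {s} w) → 𝒜.AccRun γ w := by
  induction w with
  | nil =>
    intro γ h
    exact .nil fun s hs => by
      rcases h s hs with ⟨hacc⟩
      exact hacc s (Finset.mem_singleton_self s)
  | cons x w ih =>
    obtain ⟨d, a⟩ := x
    intro γ h
    have hsucc : ∀ t, ∃ C M, t ∈ γ.delay d →
        𝒜.isTarget t.1 a C ∧ MinModel M t.2 C ∧ 𝒜.AccRun M w := by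
      intro t
      by_cases ht : t ∈ γ.delay d
      · obtain ⟨s, hs, rfl⟩ := Finset.mem_image.1 ht
        obtain ⟨C, M, hC⟩ := (accRun_singleton_cons_iff s d a w).1 (h s hs)
        exact ⟨C, M, fun _ => hC⟩
      · exact ⟨.tt, ∅, fun h => absurd h ht⟩
    choose C M hCM using hsucc
    refine .cons C ⟨fun t ht => (hCM t ht).1, M, fun t ht => (hCM t ht).2.1, rfl⟩ (ih ?_)
    intro u hu
    obtain ⟨t, ht, hu⟩ := Finset.mem_biUnion.1 hu
    exact (hCM t ht).2.2.subset (Finset.singleton_subset_iff.2 hu)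

lemma accRun_iff_forall_singleton (γ : Config Q) (w : List (ℝ≥0 × A)) :
    𝒜.AccRun γ w ↔ ∀ s ∈ γ, 𝒜.AccRun {s} w :=
  ⟨fun h _ hs => h.subset (Finset.singleton_subset_iff.2 hs), accRun_of_forall_singleton⟩

lemma accRun_singleton_nil_iff (s : Q × Option ℝ≥0) :
    𝒜.AccRun {s} [] ↔ s.1 ∈ 𝒜.final :=
  ⟨fun h => by cases h with | nil hacc => exact hacc s (Finset.mem_singleton_self s),
    fun h => .nil fun t ht => Finset.mem_singleton.1 ht ▸ h⟩

lemma accRun_singleton_cons_iff_satPred {q : Q} {a : A} {Δ : TF Q}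
    (hΔ : 𝒜.delta q a = some Δ) (v : Option ℝ≥0) (d : ℝ≥0) (w : List (ℝ≥0 × A)) :
    𝒜.AccRun {(q, v)} ((d, a) :: w) ↔
      Δ.satPred (fun s => 𝒜.AccRun {s} w) (v.map (· + d)) := by
  rw [accRun_singleton_cons_iff, ← TF.exists_sat_iff_satPred]
  simp only [stDelay, isTarget, hΔ, Option.some.injEq, exists_eq_left']
  constructor
  · rintro ⟨C, M, hC, hmin, hrun⟩
    exact ⟨M, (Δ.sat_iff_exists_disjunct _ _).2 ⟨C, hC, hmin.1⟩,
      (accRun_iff_forall_singleton M w).1 hrun⟩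
  · rintro ⟨M, hsat, hrun⟩
    obtain ⟨C, hC, hCsat⟩ := (Δ.sat_iff_exists_disjunct _ _).1 hsat
    obtain ⟨M', hM', hmin⟩ := TF.exists_minModel_subset hCsat
    exact ⟨C, M', hC, hmin, accRun_of_forall_singleton fun s hs => hrun s (hM' hs)⟩

end OneATA

end Automata

lemma Nat.exists_lt_succ_until {n : ℕ} {p q P : ℕ → Prop} :
    (∃ k < n + 1, q k ∧ (∀ j < k, p j) ∧ P k) ↔
      (q 0 ∧ P 0) ∨ (p 0 ∧ ∃ k < n, q (k + 1) ∧ (∀ j < k, p (j + 1)) ∧ P (k + 1)) := by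
  simp only [Nat.exists_lt_succ_left, Nat.forall_lt_succ_left, Nat.not_lt_zero,
    IsEmpty.forall_iff, implies_true, true_and]
  constructor
  · rintro (h | ⟨k, hk, hq, ⟨hp0, hp⟩, hP⟩)
    exacts [Or.inl h, Or.inr ⟨hp0, k, hk, hq, hp, hP⟩]
  · rintro (h | ⟨hp0, k, hk, hq, hp, hP⟩)
    exacts [Or.inl h, Or.inr ⟨k, hk, hq, ⟨hp0, hp⟩, hP⟩]

section MTLSemantics

variable {A : Type*}

@[simp]
lemma twtime_zero (w : List (ℝ≥0 × A)) : twtime w 0 = 0 := rfl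

lemma twtime_cons_succ (x : ℝ≥0 × A) (w : List (ℝ≥0 × A)) (k : ℕ) :
    twtime (x :: w) (k + 1) = x.1 + twtime w k := by
  simp [twtime]

namespace MTL

lemma not_holdsAt_nil (ψ : MTL A) (i : ℕ) : ¬ ψ.holdsAt [] i := by
  induction ψ generalizing i with
  | conj φ ψ ihφ _ => exact fun h => ihφ i h.1
  | disj φ ψ ihφ ihψ => exact fun h => h.elim (ihφ i) (ihψ i)
  | untl I φ ψ _ _ => rintro ⟨k, -, hk, -⟩; simp at hk
  | _ => rintro ⟨hi, -⟩; simp at hi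

lemma holdsAt_cons_succ (ψ : MTL A) (x : ℝ≥0 × A) (w : List (ℝ≥0 × A)) (i : ℕ) :
    ψ.holdsAt (x :: w) (i + 1) ↔ ψ.holdsAt w i := by
  induction ψ generalizing i with
  | untl I φ ψ ihφ ihψ =>
    simp only [holdsAt, twtime_cons_succ, add_tsub_add_eq_tsub_left]
    constructor
    · rintro ⟨_ | k, hik, hk, hψ, hI, hφ⟩
      · omega
      refine ⟨k, by omega, by simpa using hk, (ihψ k).1 hψ, hI, fun j hij hjk => ?_⟩
      exact (ihφ j).1 (hφ (j + 1) (by omega) (by omega))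
    · rintro ⟨k, hik, hk, hψ, hI, hφ⟩
      refine ⟨k + 1, by omega, by simpa using hk, (ihψ k).2 hψ, hI, fun j hij hjk => ?_⟩
      rcases j with _ | j
      · omega
      exact (ihφ j).2 (hφ j (by omega) (by omega))
  | _ => simp [holdsAt, *]

/-- The meaning of the state `(φ U_I ψ, v)` of the automaton on the word `w`,
where the clock value `v` is read before the first delay of `w`. -/
def UntilFrom (w : List (ℝ≥0 × A)) (I : NInterval) (φ ψ : MTL A) (v : Option ℝ≥0) : Prop :=
  ∃ k < w.length, ψ.holdsAt w k ∧ (∀ j < k, φ.holdsAt w j) ∧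
    I.admits (v.map (· + twtime w (k + 1)))

lemma untilFrom_cons (x : ℝ≥0 × A) (w : List (ℝ≥0 × A)) (I : NInterval) (φ ψ : MTL A)
    (v : Option ℝ≥0) :
    UntilFrom (x :: w) I φ ψ v ↔
      (ψ.holdsAt (x :: w) 0 ∧ I.admits (v.map (· + x.1))) ∨
      (φ.holdsAt (x :: w) 0 ∧ UntilFrom w I φ ψ (v.map (· + x.1))) := by
  simp only [UntilFrom, List.length_cons, Nat.exists_lt_succ_until, holdsAt_cons_succ,
    twtime_cons_succ, twtime_zero, add_zero, Option.map_map, Function.comp_def, add_assoc]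

lemma holdsAt_untl_zero_iff (x : ℝ≥0 × A) (w : List (ℝ≥0 × A)) (I : NInterval)
    (φ ψ : MTL A) :
    (untl I φ ψ).holdsAt (x :: w) 0 ↔
      (ψ.holdsAt (x :: w) 0 ∧ I.mem 0) ∨ (φ.holdsAt (x :: w) 0 ∧ UntilFrom w I φ ψ (some 0)) := by
  have hstart : (untl I φ ψ).holdsAt (x :: w) 0 ↔ ∃ k < (x :: w).length,
      ψ.holdsAt (x :: w) k ∧ (∀ j < k, φ.holdsAt (x :: w) j) ∧
        I.mem (twtime (x :: w) (k + 1) - twtime (x :: w) 1) := by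
    simp only [holdsAt, zero_le, true_and, forall_const, zero_add]
    exact exists_congr fun k => by tauto
  rw [hstart, List.length_cons, Nat.exists_lt_succ_until]
  simp only [UntilFrom, holdsAt_cons_succ, twtime_cons_succ, twtime_zero, add_zero, tsub_self,
    add_tsub_cancel_left, Option.map_some, zero_add, NInterval.admits_some]

lemma untilFrom_ci_zero_iff (w : List (ℝ≥0 × A)) (φ ψ : MTL A) (v : Option ℝ≥0) :
    UntilFrom w (.ci 0) φ ψ v ↔ ∃ k < w.length, ψ.holdsAt w k ∧ ∀ j < k, φ.holdsAt w j := by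
  simp only [UntilFrom, NInterval.admits_ci_zero, and_true]

end MTL

end MTLSemantics

section Construction

variable {A : Type*}

/-- The clock value that the prefix `ρ_ψ` (`x̄.` or `x.`) gives to `δ(ψ, a)`. -/
def resetClock (ψ : MTL A) : Option ℝ≥0 := if ψ.isPure then none else some 0

/-- The clock values at which `δ(ψ, a)` is evaluated in runs of the automaton:
`ψ` is either freshly reset, or pure and deactivated. -/
def ClockAdmissible (ψ : MTL A) (v : Option ℝ≥0) : Prop :=
  v = some 0 ∨ v = none ∧ ψ.isPure

lemma resetClock_admissible (ψ : MTL A) : ClockAdmissible ψ (resetClock ψ) := by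
  unfold resetClock ClockAdmissible
  split_ifs with h
  exacts [Or.inr ⟨rfl, h⟩, Or.inl rfl]

lemma ClockAdmissible.barP {ψ φ : MTL A} (hpure : ψ.isPure → φ.isPure)
    {v : Option ℝ≥0} (hv : ClockAdmissible ψ v) :
    ClockAdmissible φ (if φ.isPure then none else v) := by
  split_ifs with hφ
  · exact Or.inr ⟨rfl, hφ⟩
  · rcases hv with hv | ⟨_, hψ⟩
    exacts [Or.inl hv, absurd (hpure hψ) hφ]

lemma satPred_rhoP (ψ : MTL A) (f : TF (MLoc A)) (P : MLoc A × Option ℝ≥0 → Prop)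
    (v : Option ℝ≥0) : (rhoP ψ f).satPred P v ↔ f.satPred P (resetClock ψ) := by
  unfold rhoP resetClock
  split_ifs <;> rfl

lemma satPred_barP (ψ : MTL A) (f : TF (MLoc A)) (P : MLoc A × Option ℝ≥0 → Prop)
    (v : Option ℝ≥0) : (barP ψ f).satPred P v ↔ f.satPred P (if ψ.isPure then none else v) := by
  unfold barP
  split_ifs <;> rfl

variable [DecidableEq A] (φ₀ : MTL A)

lemma not_accRun_ataOf_nil (s : MLoc A × Option ℝ≥0) : ¬ (ataOf φ₀).AccRun {s} [] := by
  simp [OneATA.accRun_singleton_nil_iff, ataOf]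

lemma accRun_untl_iff {I : NInterval} {φ ψ : MTL A}
    (hφ : ∀ d a w, (dform φ a).satPred (fun s => (ataOf φ₀).AccRun {s} w) (resetClock φ) ↔
      φ.holdsAt ((d, a) :: w) 0)
    (hψ : ∀ d a w, (dform ψ a).satPred (fun s => (ataOf φ₀).AccRun {s} w) (resetClock ψ) ↔
      ψ.holdsAt ((d, a) :: w) 0)
    (w : List (ℝ≥0 × A)) (v : Option ℝ≥0) :
    (ataOf φ₀).AccRun {(.form (.untl I φ ψ), v)} w ↔ MTL.UntilFrom w I φ ψ v := by
  induction w generalizing v with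
  | nil => simp [not_accRun_ataOf_nil, MTL.UntilFrom]
  | cons x w ih =>
    obtain ⟨d, a⟩ := x
    rw [OneATA.accRun_singleton_cons_iff_satPred rfl, MTL.untilFrom_cons, ← hφ d, ← hψ d, ← ih]
    simp only [dform, TF.satPred, satPred_rhoP]

theorem satPred_dform_iff (ψ : MTL A) {v : Option ℝ≥0} (hv : ClockAdmissible ψ v)
    (d : ℝ≥0) (a : A) (w : List (ℝ≥0 × A)) :
    (dform ψ a).satPred (fun s => (ataOf φ₀).AccRun {s} w) v ↔ ψ.holdsAt ((d, a) :: w) 0 := by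
  induction ψ generalizing v d a w with
  | atom b => by_cases h : b = a <;> simp [dform, TF.satPred, MTL.holdsAt, h, eq_comm]
  | natom b => by_cases h : b = a <;> simp [dform, TF.satPred, MTL.holdsAt, h, eq_comm]
  | conj φ ψ ihφ ihψ =>
    simp only [dform, TF.satPred, satPred_barP]
    exact and_congr (ihφ (hv.barP fun h => by simp_all [MTL.isPure]) d a w)
      (ihψ (hv.barP fun h => by simp_all [MTL.isPure]) d a w)
  | disj φ ψ ihφ ihψ =>
    simp only [dform, TF.satPred, satPred_barP]
    exact or_congr (ihφ (hv.barP fun h => by simp_all [MTL.isPure]) d a w)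
      (ihψ (hv.barP fun h => by simp_all [MTL.isPure]) d a w)
  | next I ψ ih =>
    simp only [dform, TF.satPred]
    rcases w with _ | ⟨⟨d', a'⟩, w⟩
    · exact iff_of_false (not_accRun_ataOf_nil φ₀ _) fun ⟨h, _⟩ => by simp at h
    rw [OneATA.accRun_singleton_cons_iff_satPred rfl]
    simp only [TF.satPred, satPred_rhoP, Option.map_some, zero_add, NInterval.admits_some]
    rw [ih (resetClock_admissible ψ) d']
    simp [MTL.holdsAt, MTL.holdsAt_cons_succ, and_comm]
  | untl I φ ψ ihφ ihψ =>
    simp only [dform, TF.satPred, satPred_rhoP]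
    rw [ihψ (resetClock_admissible ψ) d, ihφ (resetClock_admissible φ) d,
      accRun_untl_iff φ₀ (ihφ (resetClock_admissible φ)) (ihψ (resetClock_admissible ψ)),
      MTL.holdsAt_untl_zero_iff]
    rcases hv with rfl | ⟨rfl, hpure⟩
    · rw [NInterval.admits_some]
    · obtain rfl : I = .ci 0 := by simp_all [MTL.isPure]
      have hmem : (NInterval.ci 0).mem 0 :=
        (NInterval.admits_some _ 0).1 (NInterval.admits_ci_zero _)
      simp only [NInterval.admits_ci_zero, hmem, MTL.untilFrom_ci_zero_iff]

end Construction

theorem statement0_general {A : Type*} [DecidableEq A] (φ : MTL A) :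
    MTL.Lang φ = OneATA.Lang (ataOf φ) := by
  ext w
  rcases w with _ | ⟨⟨d, a⟩, w⟩
  · exact iff_of_false (MTL.not_holdsAt_nil φ 0) (not_accRun_ataOf_nil φ _)
  · show φ.holdsAt _ 0 ↔ (ataOf φ).AccRun {(.start, some 0)} _
    rw [OneATA.accRun_singleton_cons_iff_satPred rfl, satPred_rhoP,
      satPred_dform_iff φ φ (resetClock_admissible φ) d]

/-- For every MTL formula `φ` (in negation normal form, over a
finite alphabet), the constructed 1-ATA `A'_φ` recognizes exactly `L(φ)`. -/
theorem statement0 {A : Type*} [Fintype A] [DecidableEq A] (φ : MTL A) :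
    MTL.Lang φ = OneATA.Lang (ataOf φ) :=
  statement0_general φ

end ATAPaper
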